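/- Under the isentropic condition n_I' = n_I ε_I'/(p_I + ε_I), the Lagrange stationarity conditions for extremizing M at fixed N₁, N₂ imply the two-fluid TOV equation p_I' = −(ε_I + p_I)(m_t + 4π r³ p_t)/(r(r − 2m_t)) for each fluid I. -/

import Mathlib

/-!
Write `gᵢ = λᵢ A^{-1/2} nᵢ / (pᵢ + εᵢ)`. Stationarity says `gᵢ = 1 - F` for both fluids, so
the two `gᵢ` share one nonzero value `g`. By the isentropic relation the `εᵢ'` terms cancel in
the logarithmic derivative of `gᵢ`, leaving `gᵢ' = -g (A'/(2A) + pᵢ'/(pᵢ + εᵢ))`, while the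
same identity turns `F' = -4π r Σ λⱼ A^{-3/2} nⱼ` into `-4π r g (p_t + ε_t) / A`.
Differentiating `gᵢ + F = 1` and dividing by `g` gives `pᵢ'/(pᵢ + εᵢ)` in terms of `A`, `A'`
and `p_t + ε_t`, and `A = 1 - 2 m_t / r`, `m_t' = 4π r² ε_t` turn this into the TOV equation.
-/

open Real Set Filter Topology

lemma hasDerivAt_one_sub_two_mul_div_self {m : ℝ → ℝ} {m' r : ℝ} (hm : HasDerivAt m m' r)
    (hr : r ≠ 0) :
    HasDerivAt (fun x => 1 - 2 * m x / x) ((2 * m r - 2 * r * m') / r ^ 2) r := by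
  refine ((hasDerivAt_const r 1).sub ((hm.const_mul 2).div (hasDerivAt_id r) hr)).congr_deriv ?_
  simp only [id]
  ring

lemma HasDerivAt.rpow_neg_one_half {a : ℝ → ℝ} {a' r : ℝ} (ha : HasDerivAt a a' r)
    (ha0 : a r ≠ 0) :
    HasDerivAt (fun x => a x ^ (-(1:ℝ)/2)) (-(a' / (2 * a r)) * a r ^ (-(1:ℝ)/2)) r := by
  refine (ha.rpow_const (Or.inl ha0)).congr_deriv ?_
  rw [rpow_sub_one ha0]
  field_simp

lemma hasDerivAt_stationarity_term {a n p ε : ℝ → ℝ} {a' e' P' r : ℝ} (lam : ℝ)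
    (ha : HasDerivAt a a' r) (hn : HasDerivAt n (n r * e' / (p r + ε r)) r)
    (hp : HasDerivAt p P' r) (hε : HasDerivAt ε e' r) (ha0 : a r ≠ 0) (hs : p r + ε r ≠ 0) :
    HasDerivAt (fun x => lam * a x ^ (-(1:ℝ)/2) * n x / (p x + ε x))
      (lam * a r ^ (-(1:ℝ)/2) * n r / (p r + ε r) *
        (-(a' / (2 * a r)) - P' / (p r + ε r))) r := by
  refine ((((ha.rpow_neg_one_half ha0).const_mul lam).mul hn).div (hp.add hε) hs).congr_deriv ?_
  simp only [Pi.mul_apply, Pi.add_apply]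
  field_simp
  ring

lemma HasDerivAt.add_eq_zero_of_eventually_add_eq {f g : ℝ → ℝ} {f' g' c x : ℝ}
    (hf : HasDerivAt f f' x) (hg : HasDerivAt g g' x) (h : ∀ᶠ y in 𝓝 x, f y + g y = c) :
    f' + g' = 0 :=
  (hf.add hg).unique ((hasDerivAt_const x c).congr_of_eventuallyEq h)

lemma tov_of_logDeriv_balance {r m a a' g s P' pt et : ℝ} (hr : 0 < r)
    (ha : a = 1 - 2 * m / r) (ha0 : 0 < a) (ha' : a' = (2 * m - 8 * π * r ^ 3 * et) / r ^ 2)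
    (hg : g ≠ 0) (hs : s ≠ 0)
    (hbal : g * (-(a' / (2 * a)) - P' / s) + -(4 * π) * r * g * (pt + et) / a = 0) :
    P' = -s * (m + 4 * π * r ^ 3 * pt) / (r * (r - 2 * m)) := by
  have hrm : 0 < r - 2 * m := by
    have : a * r = r - 2 * m := by rw [ha]; field_simp
    rw [← this]; positivity
  have hlog : -(a' / (2 * a)) - P' / s - 4 * π * r * (pt + et) / a = 0 := by
    apply mul_left_cancel₀ hg
    linear_combination hbal
  subst ha ha'
  field_simp at hlog
  rw [eq_div_iff (by positivity)]
  linear_combination (-1/2 : ℝ) * hlog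

lemma tov_of_stationarity {A mt F n p ε : ℝ → ℝ} {lam r e' P' pt et : ℝ}
    (hA : ∀ x, A x = 1 - 2 * mt x / x) (hr : 0 < r) (hA0 : 0 < A r) (hs : p r + ε r ≠ 0)
    (hg : 1 - F r ≠ 0)
    (hstat : ∀ᶠ x in 𝓝 r, lam * A x ^ (-(1:ℝ)/2) * n x / (p x + ε x) + F x = 1)
    (hε : HasDerivAt ε e' r) (hp : HasDerivAt p P' r)
    (hn : HasDerivAt n (n r * e' / (p r + ε r)) r)
    (hm : HasDerivAt mt (4 * π * r ^ 2 * et) r)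
    (hF : HasDerivAt F (-(4 * π) * r * (1 - F r) * (pt + et) / A r) r) :
    P' = -(ε r + p r) * (mt r + 4 * π * r ^ 3 * pt) / (r * (r - 2 * mt r)) := by
  have hA' : HasDerivAt A ((2 * mt r - 2 * r * (4 * π * r ^ 2 * et)) / r ^ 2) r := by
    rw [funext hA]
    exact hasDerivAt_one_sub_two_mul_div_self hm hr.ne'
  have hbal := (hasDerivAt_stationarity_term lam hA' hn hp hε hA0.ne' hs
    ).add_eq_zero_of_eventually_add_eq hF hstat
  rw [eq_sub_of_add_eq hstat.self_of_nhds] at hbal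
  rw [add_comm (ε r)]
  exact tov_of_logDeriv_balance hr (hA r) hA0 (by ring) hg hs hbal

theorem stationarity_implies_two_fluid_TOV_general
    (R : ℝ) (n₁ n₂ p₁ p₂ ε₁ ε₂ mt F A : ℝ → ℝ) (lam₁ lam₂ : ℝ)
    (hA : ∀ r, A r = 1 - 2 * mt r / r)
    (hlam₁ : lam₁ ≠ 0)
    (hApos : ∀ r ∈ Ioo (0:ℝ) R, 0 < A r)
    (hn₁pos : ∀ r ∈ Ioo (0:ℝ) R, 0 < n₁ r)
    (h1pos : ∀ r ∈ Ioo (0:ℝ) R, 0 < p₁ r + ε₁ r)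
    (h2pos : ∀ r ∈ Ioo (0:ℝ) R, 0 < p₂ r + ε₂ r)
    -- stationarity conditions on the whole interval
    (hstat1 : ∀ r ∈ Ioo (0:ℝ) R,
      lam₁ * (A r) ^ (-(1:ℝ)/2) * n₁ r / (p₁ r + ε₁ r) + F r = 1)
    (hstat2 : ∀ r ∈ Ioo (0:ℝ) R,
      lam₂ * (A r) ^ (-(1:ℝ)/2) * n₂ r / (p₂ r + ε₂ r) + F r = 1)
    (r : ℝ) (hr : r ∈ Ioo (0:ℝ) R)
    (e₁' e₂' P₁' P₂' : ℝ)
    -- differentiability data at r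
    (hε₁ : HasDerivAt ε₁ e₁' r) (hε₂ : HasDerivAt ε₂ e₂' r)
    (hp₁ : HasDerivAt p₁ P₁' r) (hp₂ : HasDerivAt p₂ P₂' r)
    -- isentropic condition n_I' = n_I ε_I' / (p_I + ε_I)
    (hn₁ : HasDerivAt n₁ (n₁ r * e₁' / (p₁ r + ε₁ r)) r)
    (hn₂ : HasDerivAt n₂ (n₂ r * e₂' / (p₂ r + ε₂ r)) r)
    -- mass function: m_t' = 4π r² ε_t
    (hm : HasDerivAt mt (4 * π * r ^ 2 * (ε₁ r + ε₂ r)) r)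
    -- F' = −4π Σ_J λ_J r A^{−3/2} n_J
    (hF : HasDerivAt F
      (-(4 * π) * (lam₁ * r * (A r) ^ (-(3:ℝ)/2) * n₁ r
        + lam₂ * r * (A r) ^ (-(3:ℝ)/2) * n₂ r)) r) :
    P₁' = -(ε₁ r + p₁ r) * (mt r + 4 * π * r ^ 3 * (p₁ r + p₂ r))
            / (r * (r - 2 * mt r)) ∧
    P₂' = -(ε₂ r + p₂ r) * (mt r + 4 * π * r ^ 3 * (p₁ r + p₂ r))
            / (r * (r - 2 * mt r)) := by
  have hnhds : Ioo (0:ℝ) R ∈ 𝓝 r := isOpen_Ioo.mem_nhds hr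
  have hA0 := hApos r hr
  have hs₁ := (h1pos r hr).ne'
  have hs₂ := (h2pos r hr).ne'
  have hk₁ := eq_sub_of_add_eq (hstat1 r hr)
  have hk₂ := eq_sub_of_add_eq (hstat2 r hr)
  have hg : 1 - F r ≠ 0 := by
    rw [← hk₁]
    have := rpow_pos_of_pos hA0 (-(1:ℝ)/2)
    have := hn₁pos r hr
    positivity
  have hF' : HasDerivAt F
      (-(4 * π) * r * (1 - F r) * ((p₁ r + p₂ r) + (ε₁ r + ε₂ r)) / A r) r := by
    refine hF.congr_deriv ?_
    rw [show -(3:ℝ)/2 = -(1:ℝ)/2 - 1 by norm_num, rpow_sub_one hA0.ne']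
    rw [div_eq_iff hs₁] at hk₁
    rw [div_eq_iff hs₂] at hk₂
    linear_combination (-(4 * π) * r / A r) * (hk₁ + hk₂)
  constructor
  · exact tov_of_stationarity hA hr.1 hA0 hs₁ hg (mem_of_superset hnhds hstat1) hε₁ hp₁ hn₁ hm hF'
  · exact tov_of_stationarity hA hr.1 hA0 hs₂ hg (mem_of_superset hnhds hstat2) hε₂ hp₂ hn₂ hm hF'

/-- Under the isentropic condition and the Lagrange stationarity condition with the
nonlocal multiplier function `F`, each fluid obeys the two-fluid TOV equation. -/
theorem stationarity_implies_two_fluid_TOV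
    (R : ℝ) (n₁ n₂ p₁ p₂ ε₁ ε₂ mt F A : ℝ → ℝ) (lam₁ lam₂ : ℝ)
    (hA : ∀ r, A r = 1 - 2 * mt r / r)
    (hlam₁ : lam₁ ≠ 0) (hlam₂ : lam₂ ≠ 0)
    (hApos : ∀ r ∈ Ioo (0:ℝ) R, 0 < A r)
    (hn₁pos : ∀ r ∈ Ioo (0:ℝ) R, 0 < n₁ r)
    (hn₂pos : ∀ r ∈ Ioo (0:ℝ) R, 0 < n₂ r)
    (h1pos : ∀ r ∈ Ioo (0:ℝ) R, 0 < p₁ r + ε₁ r)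
    (h2pos : ∀ r ∈ Ioo (0:ℝ) R, 0 < p₂ r + ε₂ r)
    -- stationarity conditions on the whole interval
    (hstat1 : ∀ r ∈ Ioo (0:ℝ) R,
      lam₁ * (A r) ^ (-(1:ℝ)/2) * n₁ r / (p₁ r + ε₁ r) + F r = 1)
    (hstat2 : ∀ r ∈ Ioo (0:ℝ) R,
      lam₂ * (A r) ^ (-(1:ℝ)/2) * n₂ r / (p₂ r + ε₂ r) + F r = 1)
    (r : ℝ) (hr : r ∈ Ioo (0:ℝ) R)
    (e₁' e₂' P₁' P₂' : ℝ)
    -- differentiability data at r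
    (hε₁ : HasDerivAt ε₁ e₁' r) (hε₂ : HasDerivAt ε₂ e₂' r)
    (hp₁ : HasDerivAt p₁ P₁' r) (hp₂ : HasDerivAt p₂ P₂' r)
    -- isentropic condition n_I' = n_I ε_I' / (p_I + ε_I)
    (hn₁ : HasDerivAt n₁ (n₁ r * e₁' / (p₁ r + ε₁ r)) r)
    (hn₂ : HasDerivAt n₂ (n₂ r * e₂' / (p₂ r + ε₂ r)) r)
    -- mass function: m_t' = 4π r² ε_t
    (hm : HasDerivAt mt (4 * π * r ^ 2 * (ε₁ r + ε₂ r)) r)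
    -- F' = −4π Σ_J λ_J r A^{−3/2} n_J
    (hF : HasDerivAt F
      (-(4 * π) * (lam₁ * r * (A r) ^ (-(3:ℝ)/2) * n₁ r
        + lam₂ * r * (A r) ^ (-(3:ℝ)/2) * n₂ r)) r) :
    P₁' = -(ε₁ r + p₁ r) * (mt r + 4 * π * r ^ 3 * (p₁ r + p₂ r))
            / (r * (r - 2 * mt r)) ∧
    P₂' = -(ε₂ r + p₂ r) * (mt r + 4 * π * r ^ 3 * (p₁ r + p₂ r))
            / (r * (r - 2 * mt r)) :=
  stationarity_implies_two_fluid_TOV_general R n₁ n₂ p₁ p₂ ε₁ ε₂ mt F A lam₁ lam₂ hA hlam₁ hApos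
    hn₁pos h1pos h2pos hstat1 hstat2 r hr e₁' e₂' P₁' P₂' hε₁ hε₂ hp₁ hp₂ hn₁ hn₂ hm hF
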